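/- arXiv:1601.03425 — 7 statements merged into one kernel-verified Lean document; each statement's English description precedes it below -/
import Mathlib

section
/- For nonnegative integers p, q, r, s, the (Minkowski) set sum S^{p,q} + S^{r,s} = {T + S : T ∈ S^{p,q}, S ∈ S^{r,s}} equals S^{p+r, q+s}. Equivalently, a Hermitian n×n complex matrix can be written as the sum of a matrix with at most p positive and at most q negative eigenvalues and a matrix with at most r positive and at most s negative eigenvalues if and only if it has at most p+r strictly positive eigenvalues and at most q+s strictly negative eigenvalues. -/
open Matrix Finset Pointwise

/-- `S^{p,q}`: the set of Hermitian `n×n` complex matrices having at most `p` strictly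
positive eigenvalues and at most `q` strictly negative eigenvalues (with multiplicity). -/
noncomputable def Spq (n p q : ℕ) : Set (Matrix (Fin n) (Fin n) ℂ) :=
  {T | ∃ hT : T.IsHermitian,
    (Finset.univ.filter fun i => 0 < hT.eigenvalues i).card ≤ p ∧
    (Finset.univ.filter fun i => hT.eigenvalues i < 0).card ≤ q}

/-! A Hermitian matrix has at most `p` positive eigenvalues iff its quadratic form
`x ↦ re ⟪x, A x⟫` is nonpositive on a subspace of codimension at most `p` (take the span of
the eigenvectors with nonpositive eigenvalue; conversely such a subspace meets the span of the
eigenvectors with positive eigenvalue only in `0`). For `T + S`, intersect such subspaces for `T`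
and `S`: codimensions add. Conversely, for `M ∈ S^{p+r,q+s}` distribute its eigenvalues between
two diagonal matrices conjugated by the eigenvector unitary of `M`: one receives at most `p`
positive and `q` negative eigenvalues, the other the rest. -/

open Module Submodule

namespace Submodule

variable {K V : Type*} [DivisionRing K] [AddCommGroup V] [Module K V] [FiniteDimensional K V]

theorem finrank_add_finrank_sub_finrank_le_finrank_inf (W₁ W₂ : Submodule K V) :
    finrank K W₁ + finrank K W₂ - finrank K V ≤ finrank K ↥(W₁ ⊓ W₂) := by
  have := finrank_sup_add_finrank_inf_eq W₁ W₂
  have := finrank_le (W₁ ⊔ W₂)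
  omega

theorem exists_mem_inf_ne_zero_of_finrank_lt {W₁ W₂ : Submodule K V}
    (h : finrank K V < finrank K W₁ + finrank K W₂) : ∃ x ∈ W₁, x ∈ W₂ ∧ x ≠ 0 := by
  have hpos : W₁ ⊓ W₂ ≠ ⊥ := by
    rw [← one_le_finrank_iff]
    have := W₁.finrank_add_finrank_sub_finrank_le_finrank_inf W₂
    omega
  obtain ⟨x, ⟨hx₁, hx₂⟩, hx⟩ := exists_mem_ne_zero_of_ne_bot hpos
  exact ⟨x, hx₁, hx₂, hx⟩

end Submodule

namespace OrthonormalBasis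

variable {𝕜 E ι : Type*} [RCLike 𝕜] [NormedAddCommGroup E] [InnerProductSpace 𝕜 E]
  [Fintype ι] (b : OrthonormalBasis ι 𝕜 E)

theorem repr_eq_zero_of_mem_span_image {s : Set ι} {x : E} (hx : x ∈ span 𝕜 (b '' s))
    {i : ι} (hi : i ∉ s) : b.repr x i = 0 := by
  have hperp : span 𝕜 (b '' s) ≤ (𝕜 ∙ b i)ᗮ := by
    refine span_le.2 ?_
    rintro _ ⟨j, hj, rfl⟩
    exact mem_orthogonal_singleton_iff_inner_right.2 (b.orthonormal.2 fun h => hi (h ▸ hj))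
  rw [b.repr_apply_apply]
  exact mem_orthogonal_singleton_iff_inner_right.1 (hperp hx)

theorem finrank_span_image (s : Finset ι) : finrank 𝕜 (span 𝕜 (b '' s)) = #s := by
  rw [Set.image_eq_range]
  exact (finrank_span_eq_card
    (b.orthonormal.comp _ Subtype.val_injective).linearIndependent).trans (by simp)

variable {b} {f : E →ₗ[𝕜] E} {μ : ι → ℝ}

theorem re_inner_apply_self (hf : ∀ i, f (b i) = (μ i : 𝕜) • b i) (x : E) :
    RCLike.re (inner 𝕜 x (f x)) = ∑ i, μ i * ‖b.repr x i‖ ^ 2 := by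
  nth_rw 2 [← b.sum_repr x]
  simp only [map_sum, map_smul, hf, smul_smul, inner_sum, inner_smul_right]
  refine sum_congr rfl fun i _ => ?_
  rw [← inner_conj_symm, ← b.repr_apply_apply, mul_right_comm, RCLike.mul_conj]
  norm_cast
  exact mul_comm _ _

theorem re_inner_apply_self_of_mem_span_image (hf : ∀ i, f (b i) = (μ i : 𝕜) • b i)
    {s : Finset ι} {x : E} (hx : x ∈ span 𝕜 (b '' s)) :
    RCLike.re (inner 𝕜 x (f x)) = ∑ i ∈ s, μ i * ‖b.repr x i‖ ^ 2 := by
  rw [re_inner_apply_self hf, ← sum_subset (subset_univ s)]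
  intro i _ hi
  simp [b.repr_eq_zero_of_mem_span_image hx hi]

theorem card_pos_le_iff_exists_submodule (hf : ∀ i, f (b i) = (μ i : 𝕜) • b i) (p : ℕ) :
    #{i | 0 < μ i} ≤ p ↔ ∃ W : Submodule 𝕜 E,
      finrank 𝕜 E - p ≤ finrank 𝕜 W ∧ ∀ x ∈ W, RCLike.re (inner 𝕜 x (f x)) ≤ 0 := by
  classical
  have : FiniteDimensional 𝕜 E := b.toBasis.finiteDimensional_of_finite
  have hE : finrank 𝕜 E = Fintype.card ι := finrank_eq_card_basis b.toBasis
  set P : Finset ι := {i | 0 < μ i}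
  constructor
  · intro hP
    refine ⟨span 𝕜 (b '' ↑Pᶜ), ?_, fun x hx => ?_⟩
    · rw [finrank_span_image, card_compl]
      omega
    · rw [re_inner_apply_self_of_mem_span_image hf hx]
      exact sum_nonpos fun i hi =>
        mul_nonpos_of_nonpos_of_nonneg (by simpa [P] using hi) (sq_nonneg _)
  · rintro ⟨W, hW, hWf⟩
    by_contra! hP
    obtain ⟨x, hxW, hxP, hx⟩ := exists_mem_inf_ne_zero_of_finrank_lt (W₁ := W)
      (W₂ := span 𝕜 (b '' P)) (by rw [finrank_span_image]; omega)
    obtain ⟨j, hj⟩ : ∃ j, b.repr x j ≠ 0 := by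
      by_contra! h
      rw [← b.sum_repr x] at hx
      simp [h] at hx
    have hjP : j ∈ P := by_contra (hj <| b.repr_eq_zero_of_mem_span_image hxP ·)
    refine (hWf x hxW).not_gt ?_
    rw [re_inner_apply_self_of_mem_span_image hf hxP]
    refine sum_pos' (fun i hi => ?_) ⟨j, hjP, ?_⟩
    · exact mul_nonneg (by simp [P] at hi; exact hi.le) (sq_nonneg _)
    · exact mul_pos (by simpa [P] using hjP) (by positivity)

theorem card_neg_le_iff_exists_submodule (hf : ∀ i, f (b i) = (μ i : 𝕜) • b i) (q : ℕ) :
    #{i | μ i < 0} ≤ q ↔ ∃ W : Submodule 𝕜 E,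
      finrank 𝕜 E - q ≤ finrank 𝕜 W ∧ ∀ x ∈ W, 0 ≤ RCLike.re (inner 𝕜 x (f x)) := by
  have hf' : ∀ i, (-f) (b i) = ((-μ i : ℝ) : 𝕜) • b i := fun i => by simp [hf]
  simpa using card_pos_le_iff_exists_submodule hf' q

end OrthonormalBasis

namespace Matrix

variable {𝕜 m : Type*} [RCLike 𝕜] [Fintype m] [DecidableEq m]

theorem toEuclideanLin_apply_eq_smul {A : Matrix m m 𝕜} {v : EuclideanSpace 𝕜 m} {c : 𝕜}
    (h : A *ᵥ v = c • ⇑v) : toEuclideanLin A v = c • v :=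
  PiLp.ext fun i => congrFun h i

namespace IsHermitian

variable {A : Matrix m m 𝕜} (hA : A.IsHermitian)

theorem toEuclideanLin_eigenvectorBasis (i : m) :
    toEuclideanLin A (hA.eigenvectorBasis i) = (hA.eigenvalues i : 𝕜) • hA.eigenvectorBasis i :=
  toEuclideanLin_apply_eq_smul <| by
    rw [hA.mulVec_eigenvectorBasis, RCLike.real_smul_eq_coe_smul (K := 𝕜)]

theorem toEuclideanLin_conj_diagonal_eigenvectorBasis (μ : m → ℝ) (i : m) :
    toEuclideanLin ((hA.eigenvectorUnitary : Matrix m m 𝕜) * diagonal (RCLike.ofReal ∘ μ) *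
        star (hA.eigenvectorUnitary : Matrix m m 𝕜)) (hA.eigenvectorBasis i) =
      (μ i : 𝕜) • hA.eigenvectorBasis i :=
  toEuclideanLin_apply_eq_smul <| by
    rw [← mulVec_mulVec, ← mulVec_mulVec, star_eigenvectorUnitary_mulVec,
      diagonal_mulVec_single, ← eigenvectorUnitary_mulVec, ← mulVec_smul]
    simp [mulVec_smul]

end IsHermitian

theorem isHermitian_conj_diagonal_ofReal (U : Matrix m m 𝕜) (μ : m → ℝ) :
    (U * diagonal (RCLike.ofReal ∘ μ) * star U).IsHermitian := by
  rw [star_eq_conjTranspose]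
  exact isHermitian_mul_mul_conjTranspose U
    (isHermitian_diagonal_iff.2 fun i => by simp [IsSelfAdjoint])

end Matrix

theorem Finset.exists_subset_card_le_card_sdiff_le {α : Type*} [DecidableEq α] {s : Finset α}
    {a b : ℕ} (h : #s ≤ a + b) : ∃ t ⊆ s, #t ≤ a ∧ #(s \ t) ≤ b := by
  obtain ⟨t, hts, ht⟩ := exists_subset_card_eq (min_le_left #s a)
  refine ⟨t, hts, ht ▸ min_le_right _ _, ?_⟩
  rw [card_sdiff_of_subset hts, ht]
  omega

theorem exists_add_eq_of_card_pos_le_add_of_card_neg_le_add {ι : Type*} [Fintype ι]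
    {l : ι → ℝ} {p q r s : ℕ} (hpos : #{i | 0 < l i} ≤ p + r) (hneg : #{i | l i < 0} ≤ q + s) :
    ∃ μ ν : ι → ℝ, μ + ν = l ∧ #{i | 0 < μ i} ≤ p ∧ #{i | μ i < 0} ≤ q ∧
      #{i | 0 < ν i} ≤ r ∧ #{i | ν i < 0} ≤ s := by
  classical
  obtain ⟨P, hP, hPp, hPr⟩ := exists_subset_card_le_card_sdiff_le hpos
  obtain ⟨N, hN, hNq, hNs⟩ := exists_subset_card_le_card_sdiff_le hneg
  have hPl : ∀ i ∈ P, 0 < l i := fun i hi => by simpa using hP hi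
  have hNl : ∀ i ∈ N, l i < 0 := fun i hi => by simpa using hN hi
  refine ⟨fun i => if i ∈ P ∪ N then l i else 0, fun i => if i ∈ P ∪ N then 0 else l i,
    funext fun i => ?_, ?_, ?_, ?_, ?_⟩
  · simp only [Pi.add_apply]
    split_ifs <;> simp
  all_goals refine (card_le_card fun i hi => ?_).trans ‹_›
  all_goals
    have := hPl i
    have := hNl i
    simp only [mem_filter, mem_univ, true_and, mem_sdiff, mem_union] at hi ⊢
    split_ifs at hi <;> grind

section Spq

variable {n p q r s : ℕ}

theorem mem_Spq_iff {A : Matrix (Fin n) (Fin n) ℂ} :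
    A ∈ Spq n p q ↔ A.IsHermitian ∧
      (∃ W : Submodule ℂ (EuclideanSpace ℂ (Fin n)), n - p ≤ finrank ℂ W ∧
        ∀ x ∈ W, RCLike.re (inner ℂ x (toEuclideanLin A x)) ≤ 0) ∧
      (∃ W : Submodule ℂ (EuclideanSpace ℂ (Fin n)), n - q ≤ finrank ℂ W ∧
        ∀ x ∈ W, 0 ≤ RCLike.re (inner ℂ x (toEuclideanLin A x))) := by
  refine (exists_congr fun hA => ?_).trans exists_prop
  have hb := hA.toEuclideanLin_eigenvectorBasis
  rw [hA.eigenvectorBasis.card_pos_le_iff_exists_submodule hb,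
    hA.eigenvectorBasis.card_neg_le_iff_exists_submodule hb, finrank_euclideanSpace_fin]

theorem mem_Spq_iff_of_orthonormalBasis {A : Matrix (Fin n) (Fin n) ℂ} (hA : A.IsHermitian)
    (b : OrthonormalBasis (Fin n) ℂ (EuclideanSpace ℂ (Fin n))) {μ : Fin n → ℝ}
    (hb : ∀ i, toEuclideanLin A (b i) = (μ i : ℂ) • b i) :
    A ∈ Spq n p q ↔ #{i | 0 < μ i} ≤ p ∧ #{i | μ i < 0} ≤ q := by
  rw [mem_Spq_iff, b.card_pos_le_iff_exists_submodule hb,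
    b.card_neg_le_iff_exists_submodule hb, finrank_euclideanSpace_fin]
  exact and_iff_right hA

theorem add_mem_Spq {T S : Matrix (Fin n) (Fin n) ℂ} (hT : T ∈ Spq n p q)
    (hS : S ∈ Spq n r s) : T + S ∈ Spq n (p + r) (q + s) := by
  obtain ⟨hT, ⟨WT, hWT, hTW⟩, ⟨VT, hVT, hTV⟩⟩ := mem_Spq_iff.1 hT
  obtain ⟨hS, ⟨WS, hWS, hSW⟩, ⟨VS, hVS, hSV⟩⟩ := mem_Spq_iff.1 hS
  have hinf : ∀ {a b : ℕ} (W W' : Submodule ℂ (EuclideanSpace ℂ (Fin n))),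
      n - a ≤ finrank ℂ W → n - b ≤ finrank ℂ W' → n - (a + b) ≤ finrank ℂ ↥(W ⊓ W') := by
    intro a b W W' hW hW'
    have := W.finrank_add_finrank_sub_finrank_le_finrank_inf W'
    rw [finrank_euclideanSpace_fin] at this
    omega
  have hre : ∀ x, RCLike.re (inner ℂ x (toEuclideanLin (T + S) x)) =
      RCLike.re (inner ℂ x (toEuclideanLin T x)) + RCLike.re (inner ℂ x (toEuclideanLin S x)) :=
    fun x => by simp only [map_add, LinearMap.add_apply, inner_add_right]
  refine mem_Spq_iff.2 ⟨hT.add hS, ⟨WT ⊓ WS, hinf _ _ hWT hWS, fun x hx => ?_⟩,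
    ⟨VT ⊓ VS, hinf _ _ hVT hVS, fun x hx => ?_⟩⟩
  · linarith [hre x, hTW x hx.1, hSW x hx.2]
  · linarith [hre x, hTV x hx.1, hSV x hx.2]

theorem Spq_subset_add : Spq n (p + r) (q + s) ⊆ Spq n p q + Spq n r s := by
  rintro M ⟨hM, hpos, hneg⟩
  obtain ⟨μ, ν, hμν, hμp, hμq, hνr, hνs⟩ :=
    exists_add_eq_of_card_pos_le_add_of_card_neg_le_add hpos hneg
  set U : Matrix (Fin n) (Fin n) ℂ := ↑hM.eigenvectorUnitary
  refine ⟨U * diagonal (RCLike.ofReal ∘ μ) * star U,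
    (mem_Spq_iff_of_orthonormalBasis (isHermitian_conj_diagonal_ofReal U μ) hM.eigenvectorBasis
      (hM.toEuclideanLin_conj_diagonal_eigenvectorBasis μ)).2 ⟨hμp, hμq⟩,
    U * diagonal (RCLike.ofReal ∘ ν) * star U,
    (mem_Spq_iff_of_orthonormalBasis (isHermitian_conj_diagonal_ofReal U ν) hM.eigenvectorBasis
      (hM.toEuclideanLin_conj_diagonal_eigenvectorBasis ν)).2 ⟨hνr, hνs⟩, ?_⟩
  change _ + _ = M
  conv_rhs => rw [hM.spectral_theorem, Unitary.conjStarAlgAut_apply, ← hμν]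
  rw [← add_mul, ← mul_add, diagonal_add]
  congr 3 with i
  simp

end Spq

theorem Spq_add (n p q r s : ℕ) :
    Spq n p q + Spq n r s = Spq n (p + r) (q + s) :=
  (Set.add_subset_iff.2 fun _ hT _ hS => add_mem_Spq hT hS).antisymm Spq_subset_add
end

section
/- A Hermitian n×n complex matrix T belongs to S^{1,1} if and only if T = ⊙(x,y) := (x y* + y x*)/2 for some column vectors x, y ∈ ℂⁿ. Equivalently, a Hermitian matrix has at most one strictly positive and at most one strictly negative eigenvalue if and only if it is a symmetric outer product ⊙(x,y). -/
open Matrix Finset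

/-- Symmetric outer product `⊙(x,y) = (x y* + y x*)/2`. -/
noncomputable def symOuter {n : ℕ} (x y : Fin n → ℂ) : Matrix (Fin n) (Fin n) ℂ :=
  (2⁻¹ : ℂ) • (Matrix.vecMulVec x (star y) + Matrix.vecMulVec y (star x))

/-!
By the spectral theorem, a Hermitian matrix with at most one positive and at most one negative
eigenvalue is `p p* - q q*`, and `p p* - q q* = ⊙(p + i q, p - i q)`. Conversely, the quadratic
form of `⊙(x, y)` vanishes on the hyperplane `y* z = 0`, which meets the span of any two
eigenvectors `v_i, v_j` nontrivially, say in `c₁ v_i + c₂ v_j`. Then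
`λ_i |c₁|² + λ_j |c₂|² = 0`, so no two eigenvalues have the same strict sign.
-/

theorem card_filter_pos_le_one_of_pairwise_mul_nonpos {ι : Type*} [Fintype ι] {f : ι → ℝ}
    (hf : Pairwise fun i j => f i * f j ≤ 0) : #{i | 0 < f i} ≤ 1 :=
  card_le_one.mpr fun _ hi _ hj => by_contra fun hij =>
    (hf hij).not_gt (mul_pos (mem_filter.mp hi).2 (mem_filter.mp hj).2)

theorem card_filter_neg_le_one_of_pairwise_mul_nonpos {ι : Type*} [Fintype ι] {f : ι → ℝ}
    (hf : Pairwise fun i j => f i * f j ≤ 0) : #{i | f i < 0} ≤ 1 :=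
  card_le_one.mpr fun _ hi _ hj => by_contra fun hij =>
    (hf hij).not_gt (mul_pos_of_neg_of_neg (mem_filter.mp hi).2 (mem_filter.mp hj).2)

theorem mul_nonpos_of_mul_add_mul_eq_zero {a b s t : ℝ} (hs : 0 ≤ s) (ht : 0 ≤ t)
    (hst : 0 < s + t) (h : a * s + b * t = 0) : a * b ≤ 0 := by
  have hsum : a * b * (s + t) = -(a ^ 2 * s + b ^ 2 * t) := by linear_combination (a + b) * h
  refine nonpos_of_mul_nonpos_left (hsum ▸ neg_nonpos.mpr ?_) hst
  positivity

theorem exists_mul_add_mul_eq_zero {K : Type*} [Field K] (a b : K) :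
    ∃ c₁ c₂ : K, (c₁ ≠ 0 ∨ c₂ ≠ 0) ∧ c₁ * a + c₂ * b = 0 := by
  by_cases ha : a = 0
  · exact ⟨1, 0, Or.inl one_ne_zero, by simp [ha]⟩
  · exact ⟨b, -a, Or.inr (neg_ne_zero.mpr ha), by ring⟩

namespace Matrix

variable {𝕜 ι : Type*} [RCLike 𝕜] [Fintype ι]

theorem exists_sum_smul_vecMulVec_eq_vecMulVec {m : Type*} {c : ι → ℝ} (hc : ∀ i, 0 ≤ c i)
    (hcard : #{i | 0 < c i} ≤ 1) (v : ι → m → 𝕜) :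
    ∃ p : m → 𝕜, ∑ i, (c i : 𝕜) • vecMulVec (v i) (star (v i)) = vecMulVec p (star p) := by
  rcases Finset.eq_empty_or_nonempty {i | 0 < c i} with hempty | ⟨i, hi⟩
  · refine ⟨0, ?_⟩
    have hzero : ∀ j, c j = 0 := fun j =>
      (not_lt.mp (filter_eq_empty_iff.mp hempty (mem_univ j))).antisymm (hc j)
    simp [hzero]
  · refine ⟨(√(c i) : 𝕜) • v i, ?_⟩
    have hsupp : ∀ j, j ≠ i → c j = 0 := fun j hji =>
      (not_lt.mp fun h => hji (card_le_one.mp hcard j (by simpa using h) i hi)).antisymm (hc j)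
    rw [sum_eq_single i (fun j _ hji => by simp [hsupp j hji]) (by simp), star_smul,
      smul_vecMulVec, vecMulVec_smul, smul_smul, RCLike.star_def, RCLike.conj_ofReal,
      ← RCLike.ofReal_mul, Real.mul_self_sqrt (hc i)]

variable [DecidableEq ι] {A : Matrix ι ι 𝕜}

theorem IsHermitian.eq_sum_eigenvalues_smul_vecMulVec (hA : A.IsHermitian) :
    A = ∑ i, (hA.eigenvalues i : 𝕜) •
      vecMulVec ⇑(hA.eigenvectorBasis i) (star ⇑(hA.eigenvectorBasis i)) := by
  conv_lhs => rw [hA.spectral_theorem]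
  ext a b
  rw [Unitary.conjStarAlgAut_apply, mul_apply]
  simp only [mul_diagonal, star_apply, sum_apply, smul_apply, vecMulVec_apply, Pi.star_apply,
    Function.comp_apply, smul_eq_mul, IsHermitian.eigenvectorUnitary_apply]
  exact sum_congr rfl fun j _ => by ring

theorem IsHermitian.exists_eq_vecMulVec_sub_vecMulVec (hA : A.IsHermitian)
    (hpos : #{i | 0 < hA.eigenvalues i} ≤ 1) (hneg : #{i | hA.eigenvalues i < 0} ≤ 1) :
    ∃ p q : ι → 𝕜, A = vecMulVec p (star p) - vecMulVec q (star q) := by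
  obtain ⟨p, hp⟩ := exists_sum_smul_vecMulVec_eq_vecMulVec (c := fun i => (hA.eigenvalues i)⁺)
    (fun i => posPart_nonneg _) (by simpa only [posPart_pos_iff] using hpos)
    fun i => ⇑(hA.eigenvectorBasis i)
  obtain ⟨q, hq⟩ := exists_sum_smul_vecMulVec_eq_vecMulVec (c := fun i => (hA.eigenvalues i)⁻)
    (fun i => negPart_nonneg _) (by simpa only [negPart_pos_iff] using hneg)
    fun i => ⇑(hA.eigenvectorBasis i)
  refine ⟨p, q, ?_⟩
  rw [← hp, ← hq, ← sum_sub_distrib]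
  conv_lhs => rw [hA.eq_sum_eigenvalues_smul_vecMulVec]
  simp only [← sub_smul, ← RCLike.ofReal_sub, posPart_sub_negPart]

theorem IsHermitian.star_dotProduct_mulVec_eigenvectorBasis_add (hA : A.IsHermitian) {i j : ι}
    (hij : i ≠ j) (c₁ c₂ : 𝕜) :
    star (c₁ • ⇑(hA.eigenvectorBasis i) + c₂ • ⇑(hA.eigenvectorBasis j)) ⬝ᵥ
        (A *ᵥ (c₁ • ⇑(hA.eigenvectorBasis i) + c₂ • ⇑(hA.eigenvectorBasis j))) =
      ((hA.eigenvalues i * ‖c₁‖ ^ 2 + hA.eigenvalues j * ‖c₂‖ ^ 2 : ℝ) : 𝕜) := by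
  have horth (k l : ι) : star ⇑(hA.eigenvectorBasis k) ⬝ᵥ ⇑(hA.eigenvectorBasis l) =
      if k = l then 1 else 0 := by
    rw [dotProduct_comm]
    exact orthonormal_iff_ite.mp hA.eigenvectorBasis.orthonormal k l
  simp only [mulVec_add, mulVec_smul, hA.mulVec_eigenvectorBasis, star_add, star_smul,
    add_dotProduct, dotProduct_add, smul_dotProduct, dotProduct_smul, horth, hij, hij.symm,
    if_true, if_false, smul_eq_mul, RCLike.real_smul_eq_coe_mul, RCLike.star_def,
    RCLike.ofReal_add, RCLike.ofReal_mul, RCLike.ofReal_pow, ← RCLike.conj_mul]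
  ring

theorem IsHermitian.pairwise_eigenvalues_mul_nonpos (hA : A.IsHermitian) (y : ι → 𝕜)
    (hy : ∀ z, star y ⬝ᵥ z = 0 → star z ⬝ᵥ (A *ᵥ z) = 0) :
    Pairwise fun i j => hA.eigenvalues i * hA.eigenvalues j ≤ 0 := by
  intro i j hij
  obtain ⟨c₁, c₂, hc, hcy⟩ := exists_mul_add_mul_eq_zero
    (star y ⬝ᵥ ⇑(hA.eigenvectorBasis i)) (star y ⬝ᵥ ⇑(hA.eigenvectorBasis j))
  have hform := hy (c₁ • ⇑(hA.eigenvectorBasis i) + c₂ • ⇑(hA.eigenvectorBasis j))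
    (by simpa only [dotProduct_add, dotProduct_smul, smul_eq_mul] using hcy)
  rw [hA.star_dotProduct_mulVec_eigenvectorBasis_add hij, RCLike.ofReal_eq_zero] at hform
  refine mul_nonpos_of_mul_add_mul_eq_zero (by positivity) (by positivity) ?_ hform
  rcases hc with hc | hc <;> positivity

end Matrix

theorem vecMulVec_sub_vecMulVec_eq_symOuter {n : ℕ} (p q : Fin n → ℂ) :
    vecMulVec p (star p) - vecMulVec q (star q) =
      symOuter (p + Complex.I • q) (p - Complex.I • q) := by
  ext a b
  simp only [symOuter, vecMulVec_apply, Matrix.sub_apply, Matrix.smul_apply, Matrix.add_apply,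
    Pi.add_apply, Pi.sub_apply, Pi.smul_apply, Pi.star_apply, star_add, star_sub, star_smul,
    smul_eq_mul, Complex.star_def, Complex.conj_I]
  linear_combination (-(q a * (starRingEnd ℂ) (q b))) * Complex.I_mul_I

theorem isHermitian_symOuter {n : ℕ} (x y : Fin n → ℂ) : (symOuter x y).IsHermitian := by
  have hM : (vecMulVec x (star y))ᴴ = vecMulVec y (star x) := by
    ext a b
    simp [vecMulVec_apply, mul_comm]
  rw [symOuter, ← hM]
  exact (isHermitian_add_transpose_self _).smul (by simp [IsSelfAdjoint])

theorem star_dotProduct_symOuter_mulVec_eq_zero {n : ℕ} (x : Fin n → ℂ) {y z : Fin n → ℂ}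
    (hz : star y ⬝ᵥ z = 0) : star z ⬝ᵥ (symOuter x y *ᵥ z) = 0 := by
  have hz' : star z ⬝ᵥ y = 0 := by rw [star_dotProduct, hz, star_zero]
  simp [symOuter, smul_mulVec, add_mulVec, vecMulVec_mulVec, hz, hz', dotProduct_smul]

theorem mem_S11_iff_symOuter_general (n : ℕ) (T : Matrix (Fin n) (Fin n) ℂ) :
    T ∈ Spq n 1 1 ↔ ∃ x y : Fin n → ℂ, T = symOuter x y := by
  constructor
  · rintro ⟨hT, hpos, hneg⟩
    obtain ⟨p, q, rfl⟩ := hT.exists_eq_vecMulVec_sub_vecMulVec hpos hneg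
    exact ⟨_, _, vecMulVec_sub_vecMulVec_eq_symOuter p q⟩
  · rintro ⟨x, y, rfl⟩
    have hT := isHermitian_symOuter x y
    have hprod := hT.pairwise_eigenvalues_mul_nonpos y
      fun _ hz => star_dotProduct_symOuter_mulVec_eq_zero x hz
    exact ⟨hT, card_filter_pos_le_one_of_pairwise_mul_nonpos hprod,
      card_filter_neg_le_one_of_pairwise_mul_nonpos hprod⟩

theorem mem_S11_iff_symOuter (n : ℕ) (T : Matrix (Fin n) (Fin n) ℂ) (hT : T.IsHermitian) :
    T ∈ Spq n 1 1 ↔ ∃ x y : Fin n → ℂ, T = symOuter x y :=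
  mem_S11_iff_symOuter_general n T
end

section
/- Let n ≥ 2 and u, v ∈ ℂⁿ, and set T = ⊙(u,v) = (u v* + v u*)/2. Then the multiset of eigenvalues of the Hermitian matrix T consists of a₊ = (Re⟨u,v⟩ + √(‖u‖²‖v‖² − (Im⟨u,v⟩)²))/2 ≥ 0, a₋ = (Re⟨u,v⟩ − √(‖u‖²‖v‖² − (Im⟨u,v⟩)²))/2 ≤ 0, and 0 with multiplicity n−2. Consequently the sum of the absolute values of the eigenvalues of T equals √(‖u‖²‖v‖² − (Im⟨u,v⟩)²), and the sum of the squares of the eigenvalues of T (i.e., trace(T²)) equals (‖u‖²‖v‖² + (Re⟨u,v⟩)² − (Im⟨u,v⟩)²)/2. -/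
/-!
`⊙(u,v)` is the rank-two matrix `A B` with `A = [u v]` and `B = ½ [v*; u*]`, so its characteristic
polynomial is `X ^ (n - 2)` times that of the `2 × 2` matrix `B A`, whose trace is `Re⟨u,v⟩` and
whose determinant is `(|⟨u,v⟩|² - ‖u‖²‖v‖²) / 4`. The roots of this quadratic are `a₊` and `a₋`,
and Cauchy–Schwarz gives `‖u‖²‖v‖² - (Im⟨u,v⟩)² ≥ (Re⟨u,v⟩)²`, hence `a₋ ≤ 0 ≤ a₊`.
-/

open Matrix Finset

/-- Standard inner product on `ℂⁿ`, linear in the first argument. -/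
noncomputable def cip {n : ℕ} (x y : Fin n → ℂ) : ℂ := ∑ i, x i * starRingEnd ℂ (y i)

/-- Squared Euclidean norm on `ℂⁿ`. -/
noncomputable def cnormSq {n : ℕ} (x : Fin n → ℂ) : ℝ := ∑ i, Complex.normSq (x i)

open Polynomial

namespace Matrix

theorem vecMulVec_add_vecMulVec {R n : Type*} [NonUnitalNonAssocSemiring R] (a b c d : n → R) :
    vecMulVec a c + vecMulVec b d = (of ![a, b])ᵀ * of ![c, d] := by
  ext i j
  simp [mul_apply, vecMulVec_apply]

theorem charpoly_vecMulVec_add_vecMulVec {R n : Type*} [CommRing R] [Nontrivial R] [Fintype n]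
    [DecidableEq n] (hn : 2 ≤ Fintype.card n) (a b c d : n → R) :
    (vecMulVec a c + vecMulVec b d).charpoly =
      X ^ (Fintype.card n - 2) * (X ^ 2 - C (c ⬝ᵥ a + d ⬝ᵥ b) * X +
        C (c ⬝ᵥ a * (d ⬝ᵥ b) - c ⬝ᵥ b * (d ⬝ᵥ a))) := by
  rw [vecMulVec_add_vecMulVec, charpoly_mul_comm_of_le _ _ (by simpa using hn), Fintype.card_fin,
    charpoly_fin_two, trace_fin_two, det_fin_two]
  simp [mul_apply, dotProduct]

theorem IsHermitian.eigenvalues_map_eq_of_charpoly_eq {𝕜 n : Type*} [RCLike 𝕜] [Fintype n]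
    [DecidableEq n] {A : Matrix n n 𝕜} (hA : A.IsHermitian) {s : Multiset ℝ}
    (h : A.charpoly = (s.map fun r : ℝ => X - C (r : 𝕜)).prod) :
    univ.val.map hA.eigenvalues = s := by
  apply Multiset.map_injective (RCLike.ofReal_injective (K := 𝕜))
  rw [Multiset.map_map, ← hA.roots_charpoly_eq_eigenvalues, h,
    show (fun r : ℝ => X - C (r : 𝕜)) = (X - C ·) ∘ RCLike.ofReal from rfl, ← Multiset.map_map,
    roots_multiset_prod_X_sub_C]

end Matrix

section CoordinateSpace

variable {n : ℕ}

theorem star_dotProduct_eq_cip (x y : Fin n → ℂ) : star y ⬝ᵥ x = cip x y := by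
  simp only [dotProduct, cip, Pi.star_apply, Complex.star_def, mul_comm]

theorem cip_self (x : Fin n → ℂ) : cip x x = cnormSq x := by
  simp [cip, cnormSq, Complex.mul_conj]

theorem cip_swap (x y : Fin n → ℂ) : cip y x = starRingEnd ℂ (cip x y) := by
  simp [cip, mul_comm]

theorem normSq_cip_le (x y : Fin n → ℂ) : Complex.normSq (cip x y) ≤ cnormSq x * cnormSq y := by
  have h : ‖cip x y‖ ≤ ∑ i, ‖x i‖ * ‖y i‖ := by
    simpa [cip] using norm_sum_le univ fun i => x i * starRingEnd ℂ (y i)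
  calc Complex.normSq (cip x y) = ‖cip x y‖ ^ 2 := (Complex.sq_norm _).symm
    _ ≤ (∑ i, ‖x i‖ * ‖y i‖) ^ 2 := by gcongr
    _ ≤ (∑ i, ‖x i‖ ^ 2) * ∑ i, ‖y i‖ ^ 2 := sum_mul_sq_le_sq_mul_sq _ _ _
    _ = cnormSq x * cnormSq y := by simp only [cnormSq, Complex.sq_norm]

theorem re_cip_sq_le (x y : Fin n → ℂ) :
    (cip x y).re ^ 2 ≤ cnormSq x * cnormSq y - (cip x y).im ^ 2 := by
  linarith [normSq_cip_le x y, Complex.normSq_apply (cip x y)]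

theorem charpoly_symOuter (hn : 2 ≤ n) (u v : Fin n → ℂ) :
    (symOuter u v).charpoly = X ^ (n - 2) * (X ^ 2 - C ((cip u v).re : ℂ) * X +
      C (((Complex.normSq (cip u v) - cnormSq u * cnormSq v) / 4 : ℝ) : ℂ)) := by
  rw [symOuter, smul_add, ← vecMulVec_smul, ← vecMulVec_smul,
    charpoly_vecMulVec_add_vecMulVec (by simpa using hn)]
  simp only [smul_dotProduct, star_dotProduct_eq_cip, cip_self, cip_swap u v, Fintype.card_fin,
    smul_eq_mul]
  push_cast
  rw [Complex.re_eq_add_conj, ← Complex.mul_conj]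
  congr 5 <;> ring

theorem charpoly_symOuter_eq_prod (hn : 2 ≤ n) (u v : Fin n → ℂ) :
    (symOuter u v).charpoly =
      ((((cip u v).re + √(cnormSq u * cnormSq v - (cip u v).im ^ 2)) / 2 ::ₘ
        ((cip u v).re - √(cnormSq u * cnormSq v - (cip u v).im ^ 2)) / 2 ::ₘ
        Multiset.replicate (n - 2) 0).map fun r : ℝ => X - C (r : ℂ)).prod := by
  set t := (cip u v).re
  set s := √(cnormSq u * cnormSq v - (cip u v).im ^ 2)
  have hs : s ^ 2 = cnormSq u * cnormSq v - (cip u v).im ^ 2 :=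
    Real.sq_sqrt ((sq_nonneg _).trans (re_cip_sq_le u v))
  have hroots_sum : (t : ℂ) = ((t + s) / 2 : ℝ) + ((t - s) / 2 : ℝ) := by
    push_cast; ring
  have hroots_prod : (Complex.normSq (cip u v) - cnormSq u * cnormSq v) / 4 =
      (t + s) / 2 * ((t - s) / 2) := by
    rw [Complex.normSq_apply]; linear_combination hs / 4
  rw [charpoly_symOuter hn, hroots_prod, hroots_sum, Complex.ofReal_mul]
  simp only [Multiset.map_cons, Multiset.map_replicate, Multiset.prod_cons, Multiset.prod_replicate,
    Complex.ofReal_zero, map_zero, sub_zero, map_add, map_mul]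
  ring

end CoordinateSpace

theorem eigenvalues_symOuter (n : ℕ) (hn : 2 ≤ n) (u v : Fin n → ℂ)
    (hT : (symOuter u v).IsHermitian) :
    0 ≤ ((cip u v).re + Real.sqrt (cnormSq u * cnormSq v - (cip u v).im ^ 2)) / 2 ∧
    ((cip u v).re - Real.sqrt (cnormSq u * cnormSq v - (cip u v).im ^ 2)) / 2 ≤ 0 ∧
    (Finset.univ.val.map hT.eigenvalues) =
      (((cip u v).re + Real.sqrt (cnormSq u * cnormSq v - (cip u v).im ^ 2)) / 2) ::ₘ
      (((cip u v).re - Real.sqrt (cnormSq u * cnormSq v - (cip u v).im ^ 2)) / 2) ::ₘ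
      Multiset.replicate (n - 2) (0 : ℝ) ∧
    (∑ i, |hT.eigenvalues i|) = Real.sqrt (cnormSq u * cnormSq v - (cip u v).im ^ 2) ∧
    (∑ i, hT.eigenvalues i ^ 2) =
      (cnormSq u * cnormSq v + (cip u v).re ^ 2 - (cip u v).im ^ 2) / 2 := by
  have hspec := hT.eigenvalues_map_eq_of_charpoly_eq (charpoly_symOuter_eq_prod hn u v)
  set t := (cip u v).re
  set s := √(cnormSq u * cnormSq v - (cip u v).im ^ 2)
  have hs : s ^ 2 = cnormSq u * cnormSq v - (cip u v).im ^ 2 :=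
    Real.sq_sqrt ((sq_nonneg _).trans (re_cip_sq_le u v))
  obtain ⟨hneg_s_le_t, ht_le_s⟩ := abs_le.mp (Real.abs_le_sqrt (re_cip_sq_le u v))
  have hsum (f : ℝ → ℝ) : ∑ i, f (hT.eigenvalues i) =
      f ((t + s) / 2) + f ((t - s) / 2) + (n - 2) • f 0 := by
    rw [show ∑ i, f (hT.eigenvalues i) = ((univ.val.map hT.eigenvalues).map f).sum by
      rw [Multiset.map_map]; rfl, hspec]
    simp only [Multiset.map_cons, Multiset.map_replicate, Multiset.sum_cons, Multiset.sum_replicate,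
      add_assoc]
  refine ⟨by linarith, by linarith, hspec, ?_, ?_⟩
  · rw [hsum (|·|), abs_zero, smul_zero, add_zero, abs_of_nonneg (by linarith),
      abs_of_nonpos (by linarith)]
    ring
  · rw [hsum (· ^ 2), zero_pow two_ne_zero, smul_zero, add_zero]
    linear_combination hs / 2
end

section
/- Let V be an ℝ-linear subspace of ℂⁿ (ℂⁿ viewed as a real vector space) and let f₁, …, f_m ∈ ℂⁿ. Then the following are equivalent: (1) for all x, y ∈ V, |⟨x,f_k⟩| = |⟨y,f_k⟩| for all k = 1,…,m implies x = c y for some c ∈ ℂ with |c| = 1; (2) there do not exist u, v ∈ V with ⊙(u,v) = (u v* + v u*)/2 ≠ 0 such that Re(⟨u,f_k⟩ · conj(⟨v,f_k⟩)) = 0 for all k = 1,…,m. -/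
/-!
Substitute `u = x + y`, `v = x - y`, a bijection of `V × V` since `2` is invertible in `ℝ`.
Then `⊙(u, v) = x x* - y y*`, and by polarization
`Re (⟨u, f_k⟩ · conj ⟨v, f_k⟩) = |⟨x, f_k⟩|² - |⟨y, f_k⟩|²`. So a pair `(u, v)` as in (2) is
exactly a pair `(x, y)` with equal measurements and `x x* ≠ y y*`, and `x x* = y y*` holds
precisely when `x` and `y` agree up to a unimodular scalar.
-/

open Matrix Finset

lemma Submodule.exists_add_eq_sub_eq {K M : Type*} [Field K] [CharZero K]
    [AddCommGroup M] [Module K M] (V : Submodule K M) {u v : M} (hu : u ∈ V) (hv : v ∈ V) :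
    ∃ x ∈ V, ∃ y ∈ V, x + y = u ∧ x - y = v :=
  ⟨(2⁻¹ : K) • (u + v), V.smul_mem _ (V.add_mem hu hv), (2⁻¹ : K) • (u - v),
    V.smul_mem _ (V.sub_mem hu hv), by module, by module⟩

lemma vecMulVec_star_self_eq_iff {ι 𝕜 : Type*} [RCLike 𝕜] {x y : ι → 𝕜} :
    vecMulVec x (star x) = vecMulVec y (star y) ↔ ∃ c : 𝕜, ‖c‖ = 1 ∧ x = c • y := by
  constructor
  · intro h
    have hxy (i j : ι) : x i * star (x j) = y i * star (y j) := by
      simpa [vecMulVec_apply] using congrFun (congrFun h i) j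
    by_cases hy : y = 0
    · refine ⟨1, norm_one, funext fun i => ?_⟩
      simpa [hy] using hxy i i
    obtain ⟨j, hj⟩ : ∃ j, y j ≠ 0 := Function.ne_iff.mp hy
    have hsq : x j * star (x j) = y j * star (y j) := hxy j j
    have hnorm : ‖x j‖ = ‖y j‖ := by
      simp only [RCLike.star_def, RCLike.mul_conj] at hsq
      exact (sq_eq_sq₀ (norm_nonneg _) (norm_nonneg _)).mp (by exact_mod_cast hsq)
    refine ⟨x j / y j, by rw [norm_div, hnorm, div_self (norm_ne_zero_iff.mpr hj)],
      funext fun i => ?_⟩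
    have hstar : star (y j) ≠ 0 := star_ne_zero.mpr hj
    rw [Pi.smul_apply, smul_eq_mul, div_mul_eq_mul_div, eq_div_iff hj]
    apply mul_right_cancel₀ hstar
    linear_combination x j * hxy i j - x i * hsq
  · rintro ⟨c, hc, rfl⟩
    ext i j
    simp only [vecMulVec_apply, Pi.star_apply, Pi.smul_apply, smul_eq_mul, star_mul']
    have : c * star c = 1 := by rw [RCLike.star_def, RCLike.mul_conj, hc]; simp
    linear_combination (y i * star (y j)) * this

lemma symOuter_add_sub {n : ℕ} (x y : Fin n → ℂ) :
    symOuter (x + y) (x - y) = vecMulVec x (star x) - vecMulVec y (star y) := by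
  simp only [symOuter, star_add, star_sub, add_vecMulVec, sub_vecMulVec, vecMulVec_add,
    vecMulVec_sub]
  module

lemma cip_add {n : ℕ} (x y f : Fin n → ℂ) : cip (x + y) f = cip x f + cip y f := by
  simp [cip, add_mul, sum_add_distrib]

lemma cip_sub {n : ℕ} (x y f : Fin n → ℂ) : cip (x - y) f = cip x f - cip y f := by
  simp [cip, sub_mul, sum_sub_distrib]

lemma Complex.re_add_mul_conj_sub (a b : ℂ) :
    ((a + b) * starRingEnd ℂ (a - b)).re = ‖a‖ ^ 2 - ‖b‖ ^ 2 := by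
  simp only [Complex.sq_norm, Complex.normSq_apply, Complex.mul_re, Complex.conj_re,
    Complex.conj_im, Complex.add_re, Complex.add_im, Complex.sub_re, Complex.sub_im]
  ring

lemma re_cip_add_mul_conj_cip_sub_eq_zero_iff {n : ℕ} (x y g : Fin n → ℂ) :
    (cip (x + y) g * starRingEnd ℂ (cip (x - y) g)).re = 0 ↔ ‖cip x g‖ = ‖cip y g‖ := by
  rw [cip_add, cip_sub, Complex.re_add_mul_conj_sub, sub_eq_zero,
    sq_eq_sq₀ (norm_nonneg _) (norm_nonneg _)]

theorem phaseRetrievable_iff_no_real_orthogonal_pair {n m : ℕ}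
    (V : Submodule ℝ (Fin n → ℂ)) (f : Fin m → (Fin n → ℂ)) :
    (∀ x ∈ V, ∀ y ∈ V,
        (∀ k, ‖cip x (f k)‖ = ‖cip y (f k)‖) →
        ∃ c : ℂ, ‖c‖ = 1 ∧ x = c • y) ↔
    ¬ ∃ u ∈ V, ∃ v ∈ V, symOuter u v ≠ 0 ∧
        ∀ k, (cip u (f k) * starRingEnd ℂ (cip v (f k))).re = 0 := by
  simp only [← vecMulVec_star_self_eq_iff]
  constructor
  · rintro h ⟨u, hu, v, hv, hne, hre⟩
    obtain ⟨x, hx, y, hy, rfl, rfl⟩ := V.exists_add_eq_sub_eq hu hv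
    rw [symOuter_add_sub, sub_ne_zero] at hne
    exact hne <| h x hx y hy fun k =>
      (re_cip_add_mul_conj_cip_sub_eq_zero_iff x y (f k)).mp (hre k)
  · intro h x hx y hy hxy
    rw [← sub_eq_zero, ← symOuter_add_sub]
    by_contra hne
    exact h ⟨x + y, V.add_mem hx hy, x - y, V.sub_mem hx hy, hne,
      fun k => (re_cip_add_mul_conj_cip_sub_eq_zero_iff x y (f k)).mpr (hxy k)⟩
end

section
/- Let f₁, …, f_m ∈ ℝⁿ span ℝⁿ. Then the following are equivalent: (1) for all x, y ∈ ℝⁿ, |⟨x,f_k⟩| = |⟨y,f_k⟩| for all k implies x = y or x = −y (phase retrievability); (2) for every x ∈ ℝⁿ with x ≠ 0, the matrix R(x) = Σ_{k=1}^m ⟨x,f_k⟩² f_k f_kᵀ is invertible; (3) there do not exist u, v ∈ ℝⁿ with u ≠ 0 and v ≠ 0 such that ⟨u,f_k⟩·⟨v,f_k⟩ = 0 for all k = 1,…,m; (4) for every subset I ⊆ {1,…,m}, either {f_k : k ∈ I} spans ℝⁿ or {f_k : k ∉ I} spans ℝⁿ. -/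
open Matrix Finset

noncomputable def rip {n : ℕ} (x y : Fin n → ℝ) : ℝ := ∑ i, x i * y i

noncomputable def Rmat {n m : ℕ} (f : Fin m → (Fin n → ℝ)) (x : Fin n → ℝ) :
    Matrix (Fin n) (Fin n) ℝ :=
  ∑ k, (rip x (f k)) ^ 2 • Matrix.vecMulVec (f k) (f k)

/-! Everything reduces to (3). Since `|a| = |b|` iff `(a - b)(a + b) = 0`, condition (1) is (3)
written in the coordinates `u = x - y`, `v = x + y`. The quadratic form of `R(x)` is
`y ↦ Σ_k (⟨x,f_k⟩⟨y,f_k⟩)²`, so `R(x) y = 0` iff `⟨x,f_k⟩⟨y,f_k⟩ = 0` for all `k`. Finally a family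
fails to span iff some nonzero vector is orthogonal to all of it; for (4) ⇒ (3) split the indices
by `I = {k | ⟨u,f_k⟩ = 0}`. -/

theorem rip_eq_dotProduct {n : ℕ} (x y : Fin n → ℝ) : rip x y = x ⬝ᵥ y := rfl

theorem forall_sub_add_iff (K : Type*) {V : Type*} [Field K] [NeZero (2 : K)] [AddCommGroup V]
    [Module K V] {P : V → V → Prop} : (∀ x y, P (x - y) (x + y)) ↔ ∀ u v, P u v := by
  refine ⟨fun h u v => ?_, fun h x y => h _ _⟩
  have hsub : (2 : K)⁻¹ • (v + u) - (2 : K)⁻¹ • (v - u) = u := by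
    match_scalars <;> field_simp <;> ring
  have hadd : (2 : K)⁻¹ • (v + u) + (2 : K)⁻¹ • (v - u) = v := by
    match_scalars <;> field_simp <;> ring
  simpa only [hsub, hadd] using h ((2 : K)⁻¹ • (v + u)) ((2 : K)⁻¹ • (v - u))

section DotProduct

variable {K ι ι' : Type*} [Fintype ι]

theorem abs_dotProduct_eq_abs_iff [CommRing K] [LinearOrder K] [IsStrictOrderedRing K]
    (x y w : ι → K) : |x ⬝ᵥ w| = |y ⬝ᵥ w| ↔ (x - y) ⬝ᵥ w * ((x + y) ⬝ᵥ w) = 0 := by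
  rw [abs_eq_abs, sub_dotProduct, add_dotProduct, mul_eq_zero, sub_eq_zero,
    add_eq_zero_iff_eq_neg]

theorem phase_retrieval_iff_forall_dotProduct_mul_eq_zero [Field K] [LinearOrder K]
    [IsStrictOrderedRing K] (f : ι' → ι → K) :
    (∀ x y : ι → K, (∀ k, |x ⬝ᵥ f k| = |y ⬝ᵥ f k|) → x = y ∨ x = -y) ↔
      ∀ u v : ι → K, (∀ k, u ⬝ᵥ f k * v ⬝ᵥ f k = 0) → u = 0 ∨ v = 0 := by
  have hsign : ∀ x y : ι → K, (x = y ∨ x = -y) ↔ (x - y = 0 ∨ x + y = 0) := fun x y => by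
    rw [sub_eq_zero, add_eq_zero_iff_eq_neg]
  simp_rw [abs_dotProduct_eq_abs_iff, hsign]
  exact forall_sub_add_iff K (P := fun u v => (∀ k, u ⬝ᵥ f k * v ⬝ᵥ f k = 0) → u = 0 ∨ v = 0)

theorem Submodule.span_eq_top_iff_forall_dotProduct_eq_zero [Field K] {S : Set (ι → K)} :
    span K S = ⊤ ↔ ∀ u : ι → K, (∀ s ∈ S, u ⬝ᵥ s = 0) → u = 0 := by
  classical
  refine ⟨fun hS u hu => ?_, fun h => ?_⟩
  · exact (dotProductEquiv K ι).map_eq_zero_iff.mp (LinearMap.ext_on hS hu)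
  · by_contra hS
    obtain ⟨φ, hφ, hφS⟩ :=
      exists_dual_map_eq_bot_of_lt_top (lt_top_iff_ne_top.mpr hS) inferInstance
    refine hφ ((dotProductEquiv K ι).symm.map_eq_zero_iff.mp (h _ fun s hs => ?_))
    have hφs : φ s ∈ (span K S).map φ := mem_map_of_mem (subset_span hs)
    rw [hφS, Submodule.mem_bot] at hφs
    rw [← hφs, ← dotProductEquiv_apply_apply, LinearEquiv.apply_symm_apply]

theorem span_image_or_span_image_compl_eq_top_iff [Field K] (f : ι' → ι → K) :
    (∀ I : Set ι', Submodule.span K (f '' I) = ⊤ ∨ Submodule.span K (f '' Iᶜ) = ⊤) ↔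
      ∀ u v : ι → K, (∀ k, u ⬝ᵥ f k * v ⬝ᵥ f k = 0) → u = 0 ∨ v = 0 := by
  simp only [Submodule.span_eq_top_iff_forall_dotProduct_eq_zero, Set.forall_mem_image]
  refine ⟨fun h u v huv => ?_, fun h I => ?_⟩
  · by_contra! ⟨hu, hv⟩
    rcases h {k | u ⬝ᵥ f k = 0} with h | h
    · exact hu (h u fun k hk => hk)
    · exact hv (h v fun k hk => (mul_eq_zero.mp (huv k)).resolve_left hk)
  · by_contra! ⟨⟨u, hu, hu0⟩, ⟨v, hv, hv0⟩⟩
    have huv : ∀ k, u ⬝ᵥ f k * v ⬝ᵥ f k = 0 := fun k => by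
      by_cases hk : k ∈ I
      · rw [hu hk, zero_mul]
      · rw [hv hk, mul_zero]
    rcases h u v huv with rfl | rfl <;> contradiction

end DotProduct

section Rmat

variable {n m : ℕ} (f : Fin m → Fin n → ℝ) (x : Fin n → ℝ)

theorem Rmat_mulVec (y : Fin n → ℝ) :
    Rmat f x *ᵥ y = ∑ k, ((x ⬝ᵥ f k) ^ 2 * (f k ⬝ᵥ y)) • f k := by
  simp [Rmat, sum_mulVec, smul_mulVec, vecMulVec_mulVec, smul_smul, rip_eq_dotProduct]

theorem dotProduct_Rmat_mulVec (y : Fin n → ℝ) :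
    y ⬝ᵥ (Rmat f x *ᵥ y) = ∑ k, (x ⬝ᵥ f k * y ⬝ᵥ f k) ^ 2 := by
  rw [Rmat_mulVec, dotProduct_sum]
  refine sum_congr rfl fun k _ => ?_
  rw [dotProduct_smul, smul_eq_mul, dotProduct_comm y]
  ring

theorem Rmat_mulVec_eq_zero_iff (y : Fin n → ℝ) :
    Rmat f x *ᵥ y = 0 ↔ ∀ k, x ⬝ᵥ f k * y ⬝ᵥ f k = 0 := by
  refine ⟨fun h k => ?_, fun h => ?_⟩
  · have hsum : ∑ k, (x ⬝ᵥ f k * y ⬝ᵥ f k) ^ 2 = 0 := by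
      rw [← dotProduct_Rmat_mulVec, h, dotProduct_zero]
    exact pow_eq_zero_iff two_ne_zero |>.mp <|
      (sum_eq_zero_iff_of_nonneg fun k _ => sq_nonneg _).mp hsum k (mem_univ k)
  · rw [Rmat_mulVec]
    refine sum_eq_zero fun k _ => ?_
    rw [dotProduct_comm (f k), sq, mul_assoc, h k, mul_zero, zero_smul]

theorem isUnit_Rmat_iff : IsUnit (Rmat f x) ↔ ∀ v, (∀ k, x ⬝ᵥ f k * v ⬝ᵥ f k = 0) → v = 0 := by
  simp_rw [← Rmat_mulVec_eq_zero_iff, isUnit_iff_isUnit_det, isUnit_iff_ne_zero, Ne,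
    ← exists_mulVec_eq_zero_iff]
  simp only [not_exists, not_and, not_imp_not]

end Rmat

theorem real_phase_retrieval_tfae_general {n m : ℕ} (f : Fin m → (Fin n → ℝ)) :
    [ -- (1) phase retrievability
      (∀ x y : Fin n → ℝ,
        (∀ k, |rip x (f k)| = |rip y (f k)|) → x = y ∨ x = -y),
      -- (2) R(x) invertible for all x ≠ 0
      (∀ x : Fin n → ℝ, x ≠ 0 → IsUnit (Rmat f x)),
      -- (3) no nonzero pair u, v with ⟨u,f_k⟩⟨v,f_k⟩ = 0 for all k
      (¬ ∃ u v : Fin n → ℝ, u ≠ 0 ∧ v ≠ 0 ∧ ∀ k, rip u (f k) * rip v (f k) = 0),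
      -- (4) complementary-span property
      (∀ I : Set (Fin m),
        Submodule.span ℝ (f '' I) = ⊤ ∨ Submodule.span ℝ (f '' Iᶜ) = ⊤) ].TFAE := by
  have h3 : (¬∃ u v : Fin n → ℝ, u ≠ 0 ∧ v ≠ 0 ∧ ∀ k, rip u (f k) * rip v (f k) = 0) ↔
      ∀ u v : Fin n → ℝ, (∀ k, u ⬝ᵥ f k * v ⬝ᵥ f k = 0) → u = 0 ∨ v = 0 := by
    simp only [rip_eq_dotProduct, not_exists, not_and, or_iff_not_imp_left]
    exact forall₂_congr fun u v => by tauto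
  tfae_have 1 ↔ 3 := (phase_retrieval_iff_forall_dotProduct_mul_eq_zero f).trans h3.symm
  tfae_have 2 ↔ 3 := by
    simp only [isUnit_Rmat_iff, h3, or_iff_not_imp_left]
    exact forall_congr' fun u => ⟨fun h v hv hu => h hu v hv, fun h hu v hv => h v hv hu⟩
  tfae_have 4 ↔ 3 := (span_image_or_span_image_compl_eq_top_iff f).trans h3.symm
  tfae_finish

theorem real_phase_retrieval_tfae {n m : ℕ} (f : Fin m → (Fin n → ℝ))
    (hspan : Submodule.span ℝ (Set.range f) = ⊤) :
    [ -- (1) phase retrievability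
      (∀ x y : Fin n → ℝ,
        (∀ k, |rip x (f k)| = |rip y (f k)|) → x = y ∨ x = -y),
      -- (2) R(x) invertible for all x ≠ 0
      (∀ x : Fin n → ℝ, x ≠ 0 → IsUnit (Rmat f x)),
      -- (3) no nonzero pair u, v with ⟨u,f_k⟩⟨v,f_k⟩ = 0 for all k
      (¬ ∃ u v : Fin n → ℝ, u ≠ 0 ∧ v ≠ 0 ∧ ∀ k, rip u (f k) * rip v (f k) = 0),
      -- (4) complementary-span property
      (∀ I : Set (Fin m),
        Submodule.span ℝ (f '' I) = ⊤ ∨ Submodule.span ℝ (f '' Iᶜ) = ⊤) ].TFAE :=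
  real_phase_retrieval_tfae_general f
end

section
/- Let f₁, …, f_m ∈ ℝⁿ be such that for all x, y ∈ ℝⁿ, |⟨x,f_k⟩| = |⟨y,f_k⟩| for all k implies x = y or x = −y (i.e., the family is phase retrievable for ℝⁿ). Then m ≥ 2n − 1. -/
/-! If `S` and its complement both index fewer than `n` of the vectors, there are nonzero `u`, `v`
with `u ⟂ f k` for `k ∈ S` and `v ⟂ f k` for `k ∉ S`. Then `u + v` and `u - v` have the same
measurements but are not equal up to sign. So for a phase retrievable family every index set or its
complement has at least `n` elements, and splitting the `m` indices into `n - 1` and `m - (n - 1)`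
forces `m ≥ 2n - 1`. -/

open Finset

def PhaseRetrievable {n : ℕ} {ι : Type*} (f : ι → Fin n → ℝ) : Prop :=
  ∀ x y : Fin n → ℝ, (∀ k, |rip x (f k)| = |rip y (f k)|) → x = y ∨ x = -y

theorem Module.Dual.exists_ne_zero_forall_eq_zero {K V ι : Type*} [Field K] [AddCommGroup V]
    [Module K V] [FiniteDimensional K V] [Fintype ι] (φ : ι → Module.Dual K V)
    (h : Fintype.card ι < Module.finrank K V) : ∃ v ≠ 0, ∀ i, φ i v = 0 := by
  have hker : LinearMap.ker (LinearMap.pi φ) ≠ ⊥ :=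
    LinearMap.ker_ne_bot_of_finrank_lt (by simpa using h)
  obtain ⟨v, hv, hv0⟩ := Submodule.exists_mem_ne_zero_of_ne_bot hker
  exact ⟨v, hv0, fun i => congrFun (LinearMap.mem_ker.1 hv) i⟩

theorem exists_ne_zero_forall_rip_eq_zero {n : ℕ} {ι : Type*} (f : ι → Fin n → ℝ)
    {S : Finset ι} (hS : #S < n) : ∃ u ≠ 0, ∀ k ∈ S, rip u (f k) = 0 := by
  obtain ⟨u, hu0, hu⟩ := Module.Dual.exists_ne_zero_forall_eq_zero
    (fun k : S => (dotProductBilin ℝ ℝ).flip (f k)) (by simpa using hS)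
  exact ⟨u, hu0, fun k hk => hu ⟨k, hk⟩⟩

theorem PhaseRetrievable.eq_zero_or_eq_zero {n : ℕ} {ι : Type*} {f : ι → Fin n → ℝ}
    (hf : PhaseRetrievable f) {S : Set ι} {u v : Fin n → ℝ}
    (hu : ∀ k ∈ S, rip u (f k) = 0) (hv : ∀ k ∉ S, rip v (f k) = 0) : u = 0 ∨ v = 0 := by
  have hmeas : ∀ k, |rip (u + v) (f k)| = |rip (u - v) (f k)| := by
    intro k
    change |(u + v) ⬝ᵥ f k| = |(u - v) ⬝ᵥ f k|
    rw [add_dotProduct, sub_dotProduct]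
    by_cases hk : k ∈ S
    · simp [show u ⬝ᵥ f k = 0 from hu k hk]
    · simp [show v ⬝ᵥ f k = 0 from hv k hk]
  rcases hf _ _ hmeas with h | h
  · right
    have : (2 : ℝ) • v = 0 := by rw [two_smul]; linear_combination (norm := abel) h
    exact (smul_eq_zero.1 this).resolve_left two_ne_zero
  · left
    have : (2 : ℝ) • u = 0 := by rw [two_smul]; linear_combination (norm := abel) h
    exact (smul_eq_zero.1 this).resolve_left two_ne_zero

theorem PhaseRetrievable.le_card_or_le_card_compl {n : ℕ} {ι : Type*} [Fintype ι] [DecidableEq ι]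
    {f : ι → Fin n → ℝ} (hf : PhaseRetrievable f) (S : Finset ι) : n ≤ #S ∨ n ≤ #Sᶜ := by
  by_contra! h
  obtain ⟨u, hu0, hu⟩ := exists_ne_zero_forall_rip_eq_zero f h.1
  obtain ⟨v, hv0, hv⟩ := exists_ne_zero_forall_rip_eq_zero f h.2
  rcases hf.eq_zero_or_eq_zero (S := ↑S) hu (fun k hk => hv k (mem_compl.2 hk)) with rfl | rfl
  exacts [hu0 rfl, hv0 rfl]

theorem two_mul_sub_one_le_card_of_forall_le_card_or_le_card_compl {α : Type*} [Fintype α]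
    [DecidableEq α] {n : ℕ} (h : ∀ S : Finset α, n ≤ #S ∨ n ≤ #Sᶜ) :
    2 * n - 1 ≤ Fintype.card α := by
  obtain ⟨S, -, hS⟩ := exists_subset_card_eq (s := (univ : Finset α))
    (n := min (Fintype.card α) (n - 1)) (by simp)
  have hSc := card_compl S
  rcases h S with h | h <;> omega

theorem real_phase_retrieval_card_lower_bound {n m : ℕ} (f : Fin m → (Fin n → ℝ))
    (hPR : ∀ x y : Fin n → ℝ,
      (∀ k, |rip x (f k)| = |rip y (f k)|) → x = y ∨ x = -y) :
    2 * n - 1 ≤ m := by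
  have hsplit := PhaseRetrievable.le_card_or_le_card_compl (f := f) hPR
  simpa using two_mul_sub_one_le_card_of_forall_le_card_or_le_card_compl hsplit
end

section
/- For every integer n ≥ 2 there exists a family of m = 4n − 4 vectors f₁, …, f_{4n−4} ∈ ℂⁿ that is phase retrievable for ℂⁿ, i.e., for all x, y ∈ ℂⁿ, |⟨x,f_k⟩| = |⟨y,f_k⟩| for all k = 1,…,4n−4 implies x = c y for some c ∈ ℂ with |c| = 1. -/
/-!
Write `N = n - 1` and identify `x` with `p = ∑ xᵢ Xⁱ`; measuring against `(conj (z ^ i))ᵢ` gives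
`|p z|`. With the conjugate reflection `p* = Xᴺ · conj(p)(1/X)`, on the circle `|z|² = s` one has
`|p z|² = conj z ^ N · (p · p*(X/s))(z)`, a polynomial identity of degree `2N`. Hence `2N + 1`
points of the unit circle determine `p · p*`. The constant and top coefficients of `p · p*(X/s)`
are read off `p · p*`, so `2N - 1` further points on a circle of radius `≠ 1` determine
`p · p*(X/s)` as well. Then `q*/p*` is a rational function invariant under `X ↦ X/s`, hence a
constant `c`; it follows that `p = c · q` with `|c| = 1`.
-/

open Finset

open Polynomial Function ComplexConjugate Complex

namespace Polynomial

lemma natDegree_comp_C_mul_X_le {R : Type*} [CommSemiring R] (p : R[X]) (c : R) :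
    (p.comp (C c * X)).natDegree ≤ p.natDegree :=
  natDegree_le_iff_coeff_eq_zero.mpr fun k hk => by
    rw [comp_C_mul_X_coeff, coeff_eq_zero_of_natDegree_lt hk, zero_mul]

lemma coeff_mul_of_natDegree_le {R : Type*} [CommSemiring R] {p q : R[X]} {m n : ℕ}
    (hp : p.natDegree ≤ m) (hq : q.natDegree ≤ n) :
    (p * q).coeff (m + n) = p.coeff m * q.coeff n := by
  simpa [coeff_reflect, mul_coeff_zero] using congrArg (coeff · 0) (reflect_mul p q hp hq)

lemma eq_zero_of_coeff_zero_of_coeff_eq_zero_of_eval_eq_zero {R : Type*} [CommRing R] [IsDomain R]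
    {p : R[X]} {d : ℕ} (hdeg : p.natDegree ≤ d) (h0 : p.coeff 0 = 0) (hd : p.coeff d = 0)
    {z : Fin (d - 1) → R} (hz : Injective z) (hz0 : ∀ i, z i ≠ 0) (heval : ∀ i, p.eval (z i) = 0) :
    p = 0 := by
  refine eq_zero_of_natDegree_lt_card_of_eval_eq_zero p (f := Fin.cons 0 z)
    (Fin.cons_injective_iff.mpr ⟨fun ⟨i, hi⟩ => hz0 i hi, hz⟩)
    (Fin.cases (by rwa [Fin.cons_zero, ← coeff_zero_eq_eval_zero]) heval) ?_
  rw [Fintype.card_fin, Nat.lt_succ_iff, natDegree_le_iff_coeff_eq_zero]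
  intro m hm
  obtain rfl | hdm : m = d ∨ d < m := by omega
  exacts [hd, coeff_eq_zero_of_natDegree_lt (hdeg.trans_lt hdm)]

section Dilation

variable {R : Type*} [CommRing R] [IsDomain R] {c : R}

lemma support_comp_C_mul_X (hc : c ≠ 0) (p : R[X]) : (p.comp (C c * X)).support = p.support := by
  ext k
  simp [hc]

lemma natTrailingDegree_comp_C_mul_X (hc : c ≠ 0) (p : R[X]) :
    (p.comp (C c * X)).natTrailingDegree = p.natTrailingDegree := by
  simp only [natTrailingDegree, trailingDegree, support_comp_C_mul_X hc]

lemma trailingCoeff_comp_C_mul_X (hc : c ≠ 0) (p : R[X]) :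
    (p.comp (C c * X)).trailingCoeff = p.trailingCoeff * c ^ p.natTrailingDegree := by
  rw [trailingCoeff, natTrailingDegree_comp_C_mul_X hc, comp_C_mul_X_coeff, trailingCoeff]

lemma natTrailingDegree_eq_of_mul_comp_eq (hc : Injective (c ^ · : ℕ → R)) {U W : R[X]}
    (hU : U ≠ 0) (hW : W ≠ 0) (h : U * W.comp (C c * X) = U.comp (C c * X) * W) :
    U.natTrailingDegree = W.natTrailingDegree := by
  have hc0 : c ≠ 0 := fun h0 => absurd (hc (a₁ := 1) (a₂ := 2) (by simp [h0])) (by norm_num)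
  have key := congrArg (coeff · (U.natTrailingDegree + W.natTrailingDegree)) h
  conv_lhs at key => rw [← natTrailingDegree_comp_C_mul_X hc0 W]
  conv_rhs at key => rw [← natTrailingDegree_comp_C_mul_X hc0 U]
  rw [coeff_mul_natTrailingDegree_add_natTrailingDegree,
    coeff_mul_natTrailingDegree_add_natTrailingDegree, trailingCoeff_comp_C_mul_X hc0,
    trailingCoeff_comp_C_mul_X hc0] at key
  have hUW : U.trailingCoeff * W.trailingCoeff ≠ 0 := by simp [hU, hW]
  exact hc (mul_left_cancel₀ hUW (by linear_combination key.symm))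

lemma exists_eq_C_mul_of_mul_comp_eq {K : Type*} [Field K] {c : K}
    (hc : Injective (c ^ · : ℕ → K)) {U V : K[X]} (hU : U ≠ 0) (h : U * V.comp (C c * X) = U.comp (C c * X) * V) : ∃ a, V = C a * U := by
  -- The relation is linear in `V`, and `W` vanishes at the trailing degree of `U`, so the
  -- previous lemma forces `W = 0`.
  set d := U.natTrailingDegree
  refine ⟨V.coeff d / U.coeff d, ?_⟩
  set W := V - C (V.coeff d / U.coeff d) * U
  have hWd : W.coeff d = 0 := by
    have : U.coeff d ≠ 0 := trailingCoeff_nonzero_iff_nonzero.mpr hU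
    simp [W, this]
  have hW : U * W.comp (C c * X) = U.comp (C c * X) * W := by
    simp only [W, sub_comp, mul_comp, C_comp]
    linear_combination h
  by_contra hne
  have hW0 : W ≠ 0 := sub_ne_zero.mpr hne
  have : W.trailingCoeff = 0 := by
    rw [trailingCoeff, ← natTrailingDegree_eq_of_mul_comp_eq hc hU hW0 hW, hWd]
  exact hW0 (trailingCoeff_eq_zero.mp this)

end Dilation

noncomputable def conjReflect (N : ℕ) (p : ℂ[X]) : ℂ[X] := reflect N (p.map (starRingEnd ℂ))

section conjReflect

variable {N : ℕ} {p : ℂ[X]}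

lemma coeff_conjReflect (k : ℕ) : (conjReflect N p).coeff k = conj (p.coeff (revAt N k)) := by
  simp [conjReflect, coeff_reflect]

lemma natDegree_conjReflect_le (hp : p.natDegree ≤ N) : (conjReflect N p).natDegree ≤ N :=
  natDegree_reflect_le.trans (max_le le_rfl ((natDegree_map_le).trans hp))

lemma eval_conjReflect_mul_pow {z : ℂ} (hz : z ≠ 0) (hp : p.natDegree ≤ N) :
    (conjReflect N p).eval (conj z)⁻¹ * conj z ^ N = conj (p.eval z) := by
  have : Invertible (conj z) := invertibleOfNonzero (by simpa using hz)
  have := eval₂_reflect_mul_pow (RingHom.id ℂ) (conj z) N (p.map (starRingEnd ℂ))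
    ((natDegree_map_le).trans hp)
  simpa [conjReflect, eval₂_map] using this

lemma conjReflect_eq_zero_iff : conjReflect N p = 0 ↔ p = 0 := by
  simp [conjReflect, reflect_eq_zero_iff]

lemma conjReflect_C_mul (a : ℂ) : conjReflect N (C a * p) = C (conj a) * conjReflect N p := by
  simp [conjReflect, Polynomial.map_mul, reflect_C_mul]

end conjReflect

noncomputable def normSqPoly (N : ℕ) (s : ℂ) (p : ℂ[X]) : ℂ[X] :=
  p * (conjReflect N p).comp (C s⁻¹ * X)

section normSqPoly

variable {N : ℕ} {s : ℂ} {p q : ℂ[X]}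

lemma normSqPoly_one : normSqPoly N 1 p = p * conjReflect N p := by simp [normSqPoly]

lemma natDegree_normSqPoly_le (hp : p.natDegree ≤ N) : (normSqPoly N s p).natDegree ≤ 2 * N :=
  (natDegree_mul_le_of_le hp
    ((natDegree_comp_C_mul_X_le _ _).trans (natDegree_conjReflect_le hp))).trans_eq (two_mul N).symm

lemma eval_normSqPoly_mul_pow {z : ℂ} (hz : z ≠ 0) (hp : p.natDegree ≤ N) :
    (normSqPoly N (normSq z) p).eval z * conj z ^ N = normSq (p.eval z) := by
  have : (normSq z : ℂ)⁻¹ * z = (conj z)⁻¹ := by rw [← mul_conj]; field_simp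
  rw [normSqPoly, eval_mul, eval_comp, eval_mul, eval_C, eval_X, this, mul_assoc,
    eval_conjReflect_mul_pow hz hp, mul_conj]

lemma eval_normSqPoly_eq_of_norm_eval_eq {z : ℂ} (hz : z ≠ 0) (hp : p.natDegree ≤ N)
    (hq : q.natDegree ≤ N) (h : ‖p.eval z‖ = ‖q.eval z‖) :
    (normSqPoly N (normSq z) p).eval z = (normSqPoly N (normSq z) q).eval z := by
  refine mul_right_cancel₀ (pow_ne_zero N (by simpa using hz : conj z ≠ 0)) ?_
  rw [eval_normSqPoly_mul_pow hz hp, eval_normSqPoly_mul_pow hz hq, normSq_eq_norm_sq,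
    normSq_eq_norm_sq, h]

lemma coeff_zero_normSqPoly : (normSqPoly N s p).coeff 0 = p.coeff 0 * conj (p.coeff N) := by
  simp [normSqPoly, mul_coeff_zero, coeff_conjReflect]

lemma coeff_two_mul_normSqPoly (hp : p.natDegree ≤ N) :
    (normSqPoly N s p).coeff (2 * N) = s⁻¹ ^ N * conj (p.coeff 0 * conj (p.coeff N)) := by
  rw [two_mul, normSqPoly, coeff_mul_of_natDegree_le hp
    ((natDegree_comp_C_mul_X_le _ _).trans (natDegree_conjReflect_le hp)), comp_C_mul_X_coeff,
    coeff_conjReflect, revAt_le le_rfl, Nat.sub_self]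
  simp only [map_mul, conj_conj]
  ring

end normSqPoly

section PhaseRetrieval

variable {N : ℕ} {p q : ℂ[X]}

lemma normSqPoly_one_eq_of_norm_eval_eq (hp : p.natDegree ≤ N) (hq : q.natDegree ≤ N)
    {u : Fin (2 * N + 1) → ℂ} (hu : Injective u) (hu1 : ∀ j, ‖u j‖ = 1)
    (h : ∀ j, ‖p.eval (u j)‖ = ‖q.eval (u j)‖) : normSqPoly N 1 p = normSqPoly N 1 q := by
  refine eq_of_natDegree_lt_card_of_eval_eq _ _ hu (fun j => ?_) ?_
  · have hz : u j ≠ 0 := norm_ne_zero_iff.mp (by rw [hu1]; exact one_ne_zero)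
    have h1 : (normSq (u j) : ℂ) = 1 := by simp [normSq_eq_norm_sq, hu1]
    simpa [h1] using eval_normSqPoly_eq_of_norm_eval_eq hz hp hq (h j)
  · rw [Fintype.card_fin, Nat.lt_succ_iff]
    exact max_le (natDegree_normSqPoly_le hp) (natDegree_normSqPoly_le hq)

lemma normSqPoly_eq_of_norm_eval_eq (hp : p.natDegree ≤ N) (hq : q.natDegree ≤ N)
    (h1 : normSqPoly N 1 p = normSqPoly N 1 q) {r : ℝ} (hr : 0 < r)
    {v : Fin (2 * N - 1) → ℂ} (hv : Injective v) (hvr : ∀ j, ‖v j‖ = r)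
    (h : ∀ j, ‖p.eval (v j)‖ = ‖q.eval (v j)‖) :
    normSqPoly N (r ^ 2 : ℝ) p = normSqPoly N (r ^ 2 : ℝ) q := by
  have h0 := congrArg (coeff · 0) h1
  simp only [coeff_zero_normSqPoly] at h0
  have hv0 : ∀ j, v j ≠ 0 := fun j => norm_ne_zero_iff.mp (by rw [hvr]; exact hr.ne')
  rw [← sub_eq_zero]
  refine eq_zero_of_coeff_zero_of_coeff_eq_zero_of_eval_eq_zero
    ((natDegree_sub_le_of_le (natDegree_normSqPoly_le hp) (natDegree_normSqPoly_le hq)).trans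
      (max_self _).le) ?_ ?_ hv hv0 fun j => ?_
  · rw [coeff_sub, coeff_zero_normSqPoly, coeff_zero_normSqPoly, h0, sub_self]
  · rw [coeff_sub, coeff_two_mul_normSqPoly hp, coeff_two_mul_normSqPoly hq, h0, sub_self]
  · have hs : (normSq (v j) : ℂ) = (r ^ 2 : ℝ) := by rw [normSq_eq_norm_sq, hvr]
    rw [eval_sub, sub_eq_zero, ← hs]
    exact eval_normSqPoly_eq_of_norm_eval_eq (hv0 j) hp hq (h j)

lemma exists_norm_eq_one_eq_C_mul_of_normSqPoly_eq {s : ℂ} (hs : Injective (s⁻¹ ^ · : ℕ → ℂ))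
    (h1 : normSqPoly N 1 p = normSqPoly N 1 q) (h : normSqPoly N s p = normSqPoly N s q) :
    ∃ c : ℂ, ‖c‖ = 1 ∧ p = C c * q := by
  rw [normSqPoly_one, normSqPoly_one] at h1
  rcases eq_or_ne p 0 with rfl | hp
  · have hq : q = 0 := by simpa [conjReflect_eq_zero_iff] using h1.symm
    exact ⟨1, norm_one, by simp [hq]⟩
  have hRp : conjReflect N p ≠ 0 := conjReflect_eq_zero_iff.not.mpr hp
  have hcross : conjReflect N p * (conjReflect N q).comp (C s⁻¹ * X)
      = (conjReflect N p).comp (C s⁻¹ * X) * conjReflect N q := by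
    refine mul_left_cancel₀ hp ?_
    unfold normSqPoly at h
    linear_combination (conjReflect N q).comp (C s⁻¹ * X) * h1 - conjReflect N q * h
  obtain ⟨a, ha⟩ := exists_eq_C_mul_of_mul_comp_eq hs hRp hcross
  have hpq : p = C a * q :=
    mul_right_cancel₀ hRp (by rw [h1, ha]; ring)
  have haa : conj a * a = 1 := by
    have : C (conj a * a) * conjReflect N p = 1 * conjReflect N p := by
      rw [C_mul, mul_assoc, ← ha, ← conjReflect_C_mul, ← hpq, one_mul]
    simpa using congrArg (coeff · 0) (mul_right_cancel₀ hRp this)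
  refine ⟨a, ?_, hpq⟩
  rw [mul_comm, mul_conj', ← ofReal_pow, ofReal_eq_one] at haa
  exact (pow_eq_one_iff_of_nonneg (norm_nonneg a) two_ne_zero).mp haa

theorem exists_norm_eq_one_eq_C_mul_of_norm_eval_eq (hp : p.natDegree ≤ N) (hq : q.natDegree ≤ N)
    {u : Fin (2 * N + 1) → ℂ} (hu : Injective u) (hu1 : ∀ j, ‖u j‖ = 1)
    {r : ℝ} (hr0 : 0 < r) (hr1 : r ≠ 1)
    {v : Fin (2 * N - 1) → ℂ} (hv : Injective v) (hvr : ∀ j, ‖v j‖ = r)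
    (hpu : ∀ j, ‖p.eval (u j)‖ = ‖q.eval (u j)‖) (hpv : ∀ j, ‖p.eval (v j)‖ = ‖q.eval (v j)‖) :
    ∃ c : ℂ, ‖c‖ = 1 ∧ p = C c * q := by
  have h1 := normSqPoly_one_eq_of_norm_eval_eq hp hq hu hu1 hpu
  refine exists_norm_eq_one_eq_C_mul_of_normSqPoly_eq (fun k l hkl => ?_) h1
    (normSqPoly_eq_of_norm_eval_eq hp hq h1 hr0 hv hvr hpv)
  have := congrArg norm hkl
  simp only [norm_pow, norm_inv, norm_real, Real.norm_eq_abs, abs_of_pos hr0] at this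
  exact pow_right_injective₀ (by positivity) (by simp [hr1, (neg_one_lt_zero.trans hr0).ne']) this

end PhaseRetrieval

end Polynomial

lemma cip_conj_pow_eq_eval_ofFn {n : ℕ} (x : Fin n → ℂ) (z : ℂ) :
    cip x (fun i => conj (z ^ (i : ℕ))) = (ofFn n x).eval z := by
  simp [cip, ofFn_eq_sum_monomial, eval_finsetSum]

theorem exists_phase_retrievable_4n_sub_4 (n : ℕ) (hn : 2 ≤ n) :
    ∃ f : Fin (4 * n - 4) → (Fin n → ℂ),
      ∀ x y : Fin n → ℂ,
        (∀ k, ‖cip x (f k)‖ = ‖cip y (f k)‖) →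
        ∃ c : ℂ, ‖c‖ = 1 ∧ x = c • y := by
  obtain ⟨N, hN, rfl⟩ : ∃ N, 1 ≤ N ∧ n = N + 1 := ⟨n - 1, by omega, by omega⟩
  obtain ⟨ω, hω⟩ : ∃ ω : ℂ, IsPrimitiveRoot ω (2 * N + 1) := ⟨_, isPrimitiveRoot_exp _ (by omega)⟩
  obtain ⟨ζ, hζ⟩ : ∃ ζ : ℂ, IsPrimitiveRoot ζ (2 * N - 1) := ⟨_, isPrimitiveRoot_exp _ (by omega)⟩
  let u : Fin (2 * N + 1) → ℂ := fun j => ω ^ (j : ℕ)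
  let v : Fin (2 * N - 1) → ℂ := fun j => 2 * ζ ^ (j : ℕ)
  let e : Fin (2 * N + 1) ⊕ Fin (2 * N - 1) ≃ Fin (4 * (N + 1) - 4) :=
    finSumFinEquiv.trans (finCongr (by omega))
  refine ⟨fun k i => conj (Sum.elim u v (e.symm k) ^ (i : ℕ)), fun x y hxy => ?_⟩
  simp only [cip_conj_pow_eq_eval_ofFn] at hxy
  have hdeg (w : Fin (N + 1) → ℂ) : (ofFn (N + 1) w).natDegree ≤ N :=
    Nat.lt_succ_iff.mp (ofFn_natDegree_lt (Nat.succ_pos N) w)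
  obtain ⟨c, hc, hxy⟩ := exists_norm_eq_one_eq_C_mul_of_norm_eval_eq (hdeg x) (hdeg y)
    (u := u) (fun i j h => Fin.ext (hω.pow_inj i.isLt j.isLt h))
    (fun j => by simp [u, hω.norm'_eq_one (by omega)]) two_pos (by norm_num)
    (v := v) (fun i j h => Fin.ext (hζ.pow_inj i.isLt j.isLt (mul_left_cancel₀ two_ne_zero h)))
    (fun j => by simp [v, hζ.norm'_eq_one (by omega)])
    (fun j => by simpa [e] using hxy (e (.inl j))) (fun j => by simpa [e] using hxy (e (.inr j)))
  exact ⟨c, hc, injective_ofFn _ (by rw [hxy, map_smul, smul_eq_C_mul])⟩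
end
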